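/- arXiv:0909.4768 — 3 statements merged into one kernel-verified Lean document; each statement's English description precedes it below -/
import Mathlib

section
/- Let L ≥ 0 and let u : ℝ → ℝ satisfy the one-sided Lipschitz (Oleĭnik-type) condition u(y) − u(x) ≤ L·(y − x) for all x ≤ y. Then for every a ≤ b the total variation of u on the interval [a,b] is finite, and in fact eVariationOn u [a,b] ≤ 2·L·(b − a) + (u(a) − u(b)). In particular, any bounded function satisfying the Oleĭnik decay estimate u(t,y) − u(t,x) ≤ (y − x)/(κ t) for fixed t > 0 has locally bounded variation in x. -/
/-!
Since `u y - u x ≤ L (y - x)`, the function `x ↦ L x - u x` is monotone, so `u` is the difference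
of the two monotone functions `x ↦ L x` and `x ↦ L x - u x`. The variation of a difference is at
most the sum of the variations, and a monotone function varies on `[a, b]` exactly by its increment:
`L (b - a) + (L (b - a) - (u b - u a))`.
-/

open Set ENNReal

theorem edist_sub_sub_le {E : Type*} [SeminormedAddCommGroup E] (a₁ a₂ b₁ b₂ : E) :
    edist (a₁ - a₂) (b₁ - b₂) ≤ edist a₁ b₁ + edist a₂ b₂ := by
  simpa only [sub_eq_add_neg, edist_neg_neg] using edist_add_add_le a₁ (-a₂) b₁ (-b₂)

theorem eVariationOn.sub_le_add {α E : Type*} [LinearOrder α] [SeminormedAddCommGroup E]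
    (f g : α → E) (s : Set α) :
    eVariationOn (f - g) s ≤ eVariationOn f s + eVariationOn g s := by
  refine iSup_le fun ⟨n, u, hu, us⟩ => ?_
  calc ∑ i ∈ Finset.range n, edist ((f - g) (u (i + 1))) ((f - g) (u i))
      ≤ ∑ i ∈ Finset.range n,
          (edist (f (u (i + 1))) (f (u i)) + edist (g (u (i + 1))) (g (u i))) :=
        Finset.sum_le_sum fun i _ => edist_sub_sub_le _ _ _ _
    _ = ∑ i ∈ Finset.range n, edist (f (u (i + 1))) (f (u i)) +
          ∑ i ∈ Finset.range n, edist (g (u (i + 1))) (g (u i)) := Finset.sum_add_distrib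
    _ ≤ eVariationOn f s + eVariationOn g s :=
        add_le_add (eVariationOn.sum_le hu us) (eVariationOn.sum_le hu us)

theorem MonotoneOn.eVariationOn_sub_le {α : Type*} [LinearOrder α] {f g : α → ℝ} {s : Set α}
    {a b : α} (hf : MonotoneOn f s) (hg : MonotoneOn g s) (as : a ∈ s) (bs : b ∈ s) (hab : a ≤ b) :
    eVariationOn (f - g) (s ∩ Icc a b) ≤ .ofReal (f b - f a + (g b - g a)) := by
  rw [ofReal_add (sub_nonneg.2 (hf as bs hab)) (sub_nonneg.2 (hg as bs hab)),
    ← hf.eVariationOn_eq as bs, ← hg.eVariationOn_eq as bs]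
  exact eVariationOn.sub_le_add f g _

theorem monotone_mul_sub_of_sub_le_mul_sub {L : ℝ} {u : ℝ → ℝ}
    (h : ∀ x y : ℝ, x ≤ y → u y - u x ≤ L * (y - x)) : Monotone fun x => L * x - u x :=
  fun x y hxy => by linarith [h x y hxy]

/-- Oleĭnik one-sided Lipschitz condition implies locally bounded variation:
if `u y - u x ≤ L (y - x)` for `x ≤ y`, then on any interval `[a, b]` the
total variation of `u` is finite and bounded by `2 L (b - a) + (u a - u b)`. -/
theorem oleinik_one_sided_lipschitz_bounded_variation
    (L : ℝ) (hL : 0 ≤ L) (u : ℝ → ℝ)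
    (h : ∀ x y : ℝ, x ≤ y → u y - u x ≤ L * (y - x)) :
    ∀ a b : ℝ, a ≤ b →
      eVariationOn u (Set.Icc a b) ≠ ⊤ ∧
      eVariationOn u (Set.Icc a b) ≤ ENNReal.ofReal (2 * L * (b - a) + (u a - u b)) := by
  intro a b hab
  have hlin : Monotone fun x : ℝ => L * x := monotone_mul_left_of_nonneg hL
  have hdecomp : u = (fun x => L * x) - fun x => L * x - u x :=
    funext fun x => (_root_.sub_sub_cancel _ _).symm
  have key : eVariationOn u (Icc a b) ≤ .ofReal (2 * L * (b - a) + (u a - u b)) := by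
    have := (hlin.monotoneOn univ).eVariationOn_sub_le
      ((monotone_mul_sub_of_sub_le_mul_sub h).monotoneOn univ) (mem_univ a) (mem_univ b) hab
    rw [univ_inter, ← hdecomp] at this
    exact this.trans_eq (congrArg ENNReal.ofReal (by ring))
  exact ⟨ne_top_of_le_ne_top ofReal_ne_top key, key⟩
end

section
/- Let T > 0, C ≥ 0, K₀ ≥ 0, A ∈ ℝ, and let 0 = t₀ < t₁ < ⋯ < t_N = T be a finite partition of [0,T]. Let m : ℝ → ℝ be continuous and nonnegative on [0,T] and differentiable on each open subinterval (t_{j−1}, t_j). For each j = 1,…,N let φ_j : ℝ → ℝ be continuous on [t_{j−1}, t_j] and differentiable on (t_{j−1}, t_j), with φ_j'(t) ≥ 0 on (t_{j−1}, t_j), and suppose Σ_{j=1}^N (φ_j(t_j) − φ_j(t_{j−1})) ≤ K₀ and m'(t) + C·φ_j'(t)·m(t) ≥ A for all t ∈ (t_{j−1}, t_j), j = 1,…,N. Then A ≤ e^{C·K₀} · m(T)/T. -/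
/-!
On each piece `[t j, t (j+1)]` the integrating factor `exp (C φ_j)` turns `m' + C φ_j' m ≥ A`
into `m (t j) + A (t (j+1) - t j) ≤ exp (C Δφ_j) m (t (j+1))`, where `Δφ_j ≥ 0` is the increase
of `φ_j` on the piece. Chaining these estimates from `m 0 ≥ 0`, the losses multiply to
`exp (C ∑ Δφ_j) ≤ exp (C K₀)`, and the gains add up to `A T`.
-/

open Set Real

theorem monotoneOn_Icc_of_hasDerivAt_nonneg {f f' : ℝ → ℝ} {a b : ℝ}
    (hfc : ContinuousOn f (Icc a b)) (hfd : ∀ s ∈ Ioo a b, HasDerivAt f (f' s) s)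
    (hf' : ∀ s ∈ Ioo a b, 0 ≤ f' s) : MonotoneOn f (Icc a b) :=
  monotoneOn_of_hasDerivWithinAt_nonneg (convex_Icc a b) hfc
    (fun s hs ↦ (hfd s (by rwa [interior_Icc] at hs)).hasDerivWithinAt)
    (fun s hs ↦ hf' s (by rwa [interior_Icc] at hs))

theorem add_mul_sub_le_exp_sub_mul {m m' w w' : ℝ → ℝ} {a b A : ℝ} (hab : a ≤ b) (hA : 0 ≤ A)
    (hmc : ContinuousOn m (Icc a b)) (hmd : ∀ s ∈ Ioo a b, HasDerivAt m (m' s) s)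
    (hwc : ContinuousOn w (Icc a b)) (hwd : ∀ s ∈ Ioo a b, HasDerivAt w (w' s) s)
    (hw : MonotoneOn w (Icc a b)) (hineq : ∀ s ∈ Ioo a b, A ≤ m' s + w' s * m s) :
    m a + A * (b - a) ≤ exp (w b - w a) * m b := by
  set g : ℝ → ℝ := fun s ↦ exp (w s) * m s - A * exp (w a) * s
  have hg : MonotoneOn g (Icc a b) := by
    refine monotoneOn_Icc_of_hasDerivAt_nonneg (f' := fun s ↦
      exp (w s) * (m' s + w' s * m s) - A * exp (w a)) ?_ (fun s hs ↦ ?_) (fun s hs ↦ ?_)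
    · exact (hwc.rexp.mul hmc).sub (continuousOn_const.mul continuousOn_id)
    · exact (((hwd s hs).exp.mul (hmd s hs)).sub ((hasDerivAt_id s).const_mul _)).congr_deriv
        (by ring)
    · refine sub_nonneg.2 ?_
      have hws : exp (w a) ≤ exp (w s) :=
        exp_le_exp.2 (hw (left_mem_Icc.2 hab) (Ioo_subset_Icc_self hs) hs.1.le)
      calc A * exp (w a) ≤ exp (w s) * A := by rw [mul_comm]; gcongr
        _ ≤ exp (w s) * (m' s + w' s * m s) := by gcongr; exact hineq s hs
  have hgab := hg (left_mem_Icc.2 hab) (right_mem_Icc.2 hab) hab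
  have hsplit : exp (w b) = exp (w a) * exp (w b - w a) := by rw [← exp_add, add_sub_cancel]
  rw [← mul_le_mul_iff_right₀ (exp_pos (w a))]
  simp only [g, hsplit] at hgab
  linarith

theorem sum_range_le_exp_sum_mul {x d δ : ℕ → ℝ} {N : ℕ} (hx₀ : 0 ≤ x 0)
    (hd : ∀ j < N, 0 ≤ d j) (hδ : ∀ j < N, 0 ≤ δ j)
    (hstep : ∀ j < N, x j + d j ≤ exp (δ j) * x (j + 1)) :
    ∑ j ∈ Finset.range N, d j ≤ exp (∑ j ∈ Finset.range N, δ j) * x N := by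
  induction N with
  | zero => simpa using hx₀
  | succ n ih =>
    have ih := ih (fun j hj ↦ hd j (by omega)) (fun j hj ↦ hδ j (by omega))
      (fun j hj ↦ hstep j (by omega))
    have hE : 1 ≤ exp (∑ j ∈ Finset.range n, δ j) :=
      one_le_exp (Finset.sum_nonneg fun j hj ↦ hδ j (by simp at hj; omega))
    have hdn := hd n n.lt_succ_self
    rw [Finset.sum_range_succ, Finset.sum_range_succ, exp_add, mul_assoc]
    calc ∑ j ∈ Finset.range n, d j + d n
        ≤ exp (∑ j ∈ Finset.range n, δ j) * (x n + d n) := by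
          nlinarith [mul_le_mul_of_nonneg_right hE hdn]
      _ ≤ _ := by gcongr; exact hstep n n.lt_succ_self

theorem piecewise_gronwall_decay_general
    (T C K₀ A : ℝ) (hT : 0 < T) (hC : 0 ≤ C)
    (N : ℕ) (t : ℕ → ℝ) (ht0 : t 0 = 0) (htN : t N = T)
    (htmono : ∀ j < N, t j < t (j + 1))
    (m m' : ℝ → ℝ) (φ : ℕ → ℝ → ℝ) (φ' : ℕ → ℝ → ℝ)
    (hmc : ContinuousOn m (Set.Icc 0 T))
    (hm0 : ∀ s ∈ Set.Icc (0:ℝ) T, 0 ≤ m s)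
    (hmd : ∀ j < N, ∀ s ∈ Set.Ioo (t j) (t (j + 1)), HasDerivAt m (m' s) s)
    (hφc : ∀ j < N, ContinuousOn (φ j) (Set.Icc (t j) (t (j + 1))))
    (hφd : ∀ j < N, ∀ s ∈ Set.Ioo (t j) (t (j + 1)), HasDerivAt (φ j) (φ' j s) s)
    (hφ'0 : ∀ j < N, ∀ s ∈ Set.Ioo (t j) (t (j + 1)), 0 ≤ φ' j s)
    (hsum : ∑ j ∈ Finset.range N, (φ j (t (j + 1)) - φ j (t j)) ≤ K₀)
    (hineq : ∀ j < N, ∀ s ∈ Set.Ioo (t j) (t (j + 1)), A ≤ m' s + C * φ' j s * m s) :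
    A ≤ Real.exp (C * K₀) * m T / T := by
  have hmT : 0 ≤ m T := hm0 T ⟨hT.le, le_rfl⟩
  rw [le_div_iff₀ hT]
  rcases le_or_gt A 0 with hA | hA
  · exact (mul_nonpos_of_nonpos_of_nonneg hA hT.le).trans (mul_nonneg (exp_pos _).le hmT)
  have ht : MonotoneOn t (Iic N) :=
    monotoneOn_of_le_add_one ordConnected_Iic fun j _ _ hj ↦ (htmono j hj).le
  have hsub (j : ℕ) (hj : j < N) : Icc (t j) (t (j + 1)) ⊆ Icc 0 T :=
    Icc_subset_Icc (ht0 ▸ ht (Nat.zero_le N) hj.le (Nat.zero_le j))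
      (htN ▸ ht hj (le_refl N) hj)
  have hφ (j : ℕ) (hj : j < N) : MonotoneOn (φ j) (Icc (t j) (t (j + 1))) :=
    monotoneOn_Icc_of_hasDerivAt_nonneg (hφc j hj) (hφd j hj) (hφ'0 j hj)
  have hstep (j : ℕ) (hj : j < N) : m (t j) + A * (t (j + 1) - t j) ≤
      exp (C * (φ j (t (j + 1)) - φ j (t j))) * m (t (j + 1)) := by
    have := add_mul_sub_le_exp_sub_mul (w := fun s ↦ C * φ j s) (htmono j hj).le hA.le
      (hmc.mono (hsub j hj)) (hmd j hj)
      (continuousOn_const.mul (hφc j hj)) (fun s hs ↦ (hφd j hj s hs).const_mul C)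
      ((monotone_mul_left_of_nonneg hC).comp_monotoneOn (hφ j hj))
      (fun s hs ↦ by simpa only [mul_assoc] using hineq j hj s hs)
    rwa [← mul_sub] at this
  have hgron := sum_range_le_exp_sum_mul (x := fun j ↦ m (t j))
    (hm0 _ (by rw [ht0]; exact ⟨le_rfl, hT.le⟩))
    (fun j hj ↦ mul_nonneg hA.le (sub_nonneg.2 (htmono j hj).le))
    (fun j hj ↦ mul_nonneg hC (sub_nonneg.2 (hφ j hj (left_mem_Icc.2 (htmono j hj).le)
      (right_mem_Icc.2 (htmono j hj).le) (htmono j hj).le))) hstep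
  rw [← Finset.mul_sum, Finset.sum_range_sub, ← Finset.mul_sum, ht0, htN, sub_zero] at hgron
  calc A * T ≤ exp (C * ∑ j ∈ Finset.range N, (φ j (t (j + 1)) - φ j (t j))) * m T := hgron
    _ ≤ exp (C * K₀) * m T := by gcongr

/-- Piecewise Gronwall lemma: with a partition `0 = t₀ < t₁ < ⋯ < t_N = T`,
weights `φ_j` nondecreasing on each `(t_{j-1}, t_j)` whose total increase is
at most `K₀`, `m ≥ 0` continuous, and `m' + C φ_j' m ≥ A` on each open
subinterval, one gets `A ≤ e^{C K₀} m(T) / T`. -/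
theorem piecewise_gronwall_decay
    (T C K₀ A : ℝ) (hT : 0 < T) (hC : 0 ≤ C) (hK₀ : 0 ≤ K₀)
    (N : ℕ) (hN : 0 < N) (t : ℕ → ℝ) (ht0 : t 0 = 0) (htN : t N = T)
    (htmono : ∀ j < N, t j < t (j + 1))
    (m m' : ℝ → ℝ) (φ : ℕ → ℝ → ℝ) (φ' : ℕ → ℝ → ℝ)
    (hmc : ContinuousOn m (Set.Icc 0 T))
    (hm0 : ∀ s ∈ Set.Icc (0:ℝ) T, 0 ≤ m s)
    (hmd : ∀ j < N, ∀ s ∈ Set.Ioo (t j) (t (j + 1)), HasDerivAt m (m' s) s)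
    (hφc : ∀ j < N, ContinuousOn (φ j) (Set.Icc (t j) (t (j + 1))))
    (hφd : ∀ j < N, ∀ s ∈ Set.Ioo (t j) (t (j + 1)), HasDerivAt (φ j) (φ' j s) s)
    (hφ'0 : ∀ j < N, ∀ s ∈ Set.Ioo (t j) (t (j + 1)), 0 ≤ φ' j s)
    (hsum : ∑ j ∈ Finset.range N, (φ j (t (j + 1)) - φ j (t j)) ≤ K₀)
    (hineq : ∀ j < N, ∀ s ∈ Set.Ioo (t j) (t (j + 1)), A ≤ m' s + C * φ' j s * m s) :
    A ≤ Real.exp (C * K₀) * m T / T :=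
  piecewise_gronwall_decay_general T C K₀ A hT hC N t ht0 htN htmono m m' φ φ' hmc hm0 hmd hφc hφd
    hφ'0 hsum hineq
end

section
/- Let L > 0 and κ > 0, and let z : ℝ → ℝ be continuous on [0,∞) and differentiable on (0,∞), with z(t) > 0 for all t ≥ 0 and satisfying the differential inequality z'(t) ≤ L·z(t) − κ·z(t)² for all t > 0. Then z(t) ≤ e^{L t}/(κ t) for every t > 0. -/
/-!
Substituting `v t = e^{L t} / z t` linearises the Riccati inequality:
`v' = e^{L t} (L z - z') / z²` is at least `κ e^{L t} ≥ κ`, so `v` grows at least like `κ t`.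
Since `v > 0`, `v t ≥ κ (t - s)` for every `s ∈ (0, t)`, and letting `s → 0⁺` gives `v t ≥ κ t`,
which is the bound. Only the sign of `v`, not its size, enters, which is why the estimate is
uniform in the initial slope.
-/

open Set Filter Topology

theorem mul_le_of_le_deriv_of_nonneg {v v' : ℝ → ℝ} {κ : ℝ}
    (hv : ∀ t ∈ Ioi (0 : ℝ), HasDerivAt v (v' t) t) (hv' : ∀ t ∈ Ioi (0 : ℝ), κ ≤ v' t)
    (hv_nonneg : ∀ t ∈ Ioi (0 : ℝ), 0 ≤ v t) {t : ℝ} (ht : 0 < t) : κ * t ≤ v t := by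
  have hgrowth : ∀ s ∈ Ioo 0 t, κ * (t - s) ≤ v t := by
    intro s ⟨hs, hst⟩
    have := (convex_Ioi (0 : ℝ)).mul_sub_le_image_sub_of_le_deriv
      (fun x hx => (hv x hx).continuousAt.continuousWithinAt)
      (fun x hx => (hv x (interior_subset hx)).differentiableAt.differentiableWithinAt)
      (fun x hx => (hv x (interior_subset hx)).deriv ▸ hv' x (interior_subset hx))
      s hs t ht hst.le
    linarith [hv_nonneg s hs]
  have hlim : Tendsto (fun s => κ * (t - s)) (𝓝[>] 0) (𝓝 (κ * t)) :=
    ((by fun_prop : Continuous fun s : ℝ => κ * (t - s)).tendsto' 0 _ (by simp)).mono_left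
      nhdsWithin_le_nhds
  exact le_of_tendsto hlim (eventually_of_mem (Ioo_mem_nhdsGT ht) hgrowth)

theorem hasDerivAt_exp_mul_div {z : ℝ → ℝ} {z' L t : ℝ} (hz : HasDerivAt z z' t) (hzt : z t ≠ 0) :
    HasDerivAt (fun s => Real.exp (L * s) / z s)
      (Real.exp (L * t) * (L * z t - z') / z t ^ 2) t := by
  have hexp : HasDerivAt (fun s => Real.exp (L * s)) (Real.exp (L * t) * L) t :=
    ((hasDerivAt_id' t).const_mul L).exp.congr_deriv (by ring)
  exact (hexp.div hz hzt).congr_deriv (by ring)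

theorem le_exp_mul_div_of_riccati {L κ z z' e : ℝ} (hκ : 0 ≤ κ) (hz : 0 < z) (he : 1 ≤ e)
    (hineq : z' ≤ L * z - κ * z ^ 2) : κ ≤ e * (L * z - z') / z ^ 2 := by
  rw [le_div_iff₀ (by positivity)]
  calc κ * z ^ 2 ≤ e * (κ * z ^ 2) := le_mul_of_one_le_left (by positivity) he
    _ ≤ e * (L * z - z') := by gcongr; linarith

theorem riccati_comparison_decay_general
    (L κ : ℝ) (hL : 0 < L) (hκ : 0 < κ)
    (z z' : ℝ → ℝ)
    (hzd : ∀ t ∈ Set.Ioi (0:ℝ), HasDerivAt z (z' t) t)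
    (hzpos : ∀ t : ℝ, 0 ≤ t → 0 < z t)
    (hineq : ∀ t ∈ Set.Ioi (0:ℝ), z' t ≤ L * z t - κ * z t ^ 2) :
    ∀ t : ℝ, 0 < t → z t ≤ Real.exp (L * t) / (κ * t) := by
  intro t ht
  have hv : κ * t ≤ Real.exp (L * t) / z t :=
    mul_le_of_le_deriv_of_nonneg
      (fun s hs => hasDerivAt_exp_mul_div (hzd s hs) (hzpos s hs.le).ne')
      (fun s hs => le_exp_mul_div_of_riccati hκ.le (hzpos s hs.le)
        (Real.one_le_exp (mul_pos hL hs).le) (hineq s hs))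
      (fun s hs => (div_pos (Real.exp_pos _) (hzpos s hs.le)).le) ht
  rw [le_div_iff₀ (hzpos t ht.le)] at hv
  rw [le_div_iff₀ (mul_pos hκ ht)]
  linarith

/-- Riccati comparison: a positive function satisfying `z' ≤ L z - κ z²` on
`(0,∞)` obeys the Oleĭnik decay bound `z t ≤ e^{L t}/(κ t)` for `t > 0`. -/
theorem riccati_comparison_decay
    (L κ : ℝ) (hL : 0 < L) (hκ : 0 < κ)
    (z z' : ℝ → ℝ)
    (hzc : ContinuousOn z (Set.Ici 0))
    (hzd : ∀ t ∈ Set.Ioi (0:ℝ), HasDerivAt z (z' t) t)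
    (hzpos : ∀ t : ℝ, 0 ≤ t → 0 < z t)
    (hineq : ∀ t ∈ Set.Ioi (0:ℝ), z' t ≤ L * z t - κ * z t ^ 2) :
    ∀ t : ℝ, 0 < t → z t ≤ Real.exp (L * t) / (κ * t) :=
  riccati_comparison_decay_general L κ hL hκ z z' hzd hzpos hineq
end
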